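/- arXiv:1801.00137 — 3 statements merged into one kernel-verified Lean document; each statement's English description precedes it below -/
import Mathlib

section
/- Suppose (P*, λ*, μ*) is a KKT triple for the ED problem, P*_i > 0 for at least two distinct indices, and b* ∈ ℝ^n satisfies λ* ≤ b*_j ≤ C_j'(P*_j) for all j. Fix a generator i and a deviating bid b_i > b*_i. Then every optimizer P of the ISO problem for bids (b_i, b*_{-i}) satisfies P_i = 0, and consequently Π_i(b_i, P_i) = −C_i(0) ≤ Π_i(b*_i, P*_i) = b*_i P*_i − C_i(P*_i). -/
open Finset

noncomputable section

/-- Feasible production profiles for the dispatch problems: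
power balance `1ᵀP = 1ᵀP_d` and componentwise nonnegativity. -/
def Feasible {n : ℕ} (Pd P : Fin n → ℝ) : Prop :=
  (∑ i, P i = ∑ i, Pd i) ∧ ∀ i, 0 ≤ P i

/-- `P` is an optimizer of the ISO problem for bids `b`:
it minimizes `bᵀP` over the feasible set. -/
def IsISOOpt {n : ℕ} (Pd b P : Fin n → ℝ) : Prop :=
  Feasible Pd P ∧ ∀ Q, Feasible Pd Q → ∑ i, b i * P i ≤ ∑ i, b i * Q i

/-- `P` is a minimizer of the economic dispatch (ED) problem. -/
def IsEDOpt {n : ℕ} (C : Fin n → ℝ → ℝ) (Pd P : Fin n → ℝ) : Prop :=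
  Feasible Pd P ∧ ∀ Q, Feasible Pd Q → ∑ i, C i (P i) ≤ ∑ i, C i (Q i)

/-- `(P, lam, mu)` is a KKT triple for the ED problem, with `C' i` the marginal
cost of generator `i`. -/
def IsKKT {n : ℕ} (C' : Fin n → ℝ → ℝ) (Pd P : Fin n → ℝ) (lam : ℝ)
    (mu : Fin n → ℝ) : Prop :=
  (∀ i, C' i (P i) = lam + mu i) ∧ (∑ i, P i = ∑ i, Pd i) ∧
    (∀ i, 0 ≤ P i) ∧ (∀ i, 0 ≤ mu i) ∧ (∑ i, P i * mu i = 0)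

/-- Payoff of a generator with cost `Ci` bidding `bi` and producing `Pi`. -/
def Payoff (Ci : ℝ → ℝ) (bi Pi : ℝ) : ℝ := Pi * bi - Ci Pi

/-- `bstar` is a Nash equilibrium of the inelastic electricity market game. -/
def IsNash {n : ℕ} (C : Fin n → ℝ → ℝ) (Pd bstar : Fin n → ℝ) : Prop :=
  (∀ i, 0 ≤ bstar i) ∧
  ∃ P0, IsISOOpt Pd bstar P0 ∧
    ∀ i (bi : ℝ), 0 ≤ bi → bi ≠ bstar i →
      ∀ P, IsISOOpt Pd (Function.update bstar i bi) P →
        Payoff (C i) bi (P i) ≤ Payoff (C i) (bstar i) (P0 i)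

/-- `bstar` is an efficient bid: the optimizer of the ED problem is also an
optimizer of the ISO problem for bids `bstar`, and each `Pstar i` maximizes
the profit `P ↦ P * bstar i - C i P` over `P ≥ 0`. -/
def IsEfficientBid {n : ℕ} (C : Fin n → ℝ → ℝ) (Pd bstar : Fin n → ℝ) : Prop :=
  (∀ i, 0 ≤ bstar i) ∧
  ∀ Pstar, IsEDOpt C Pd Pstar →
    IsISOOpt Pd bstar Pstar ∧
      ∀ i, ∀ P, 0 ≤ P → Payoff (C i) (bstar i) P ≤ Payoff (C i) (bstar i) (Pstar i)

/-- Standing assumptions on a generator cost function: continuously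
differentiable with derivative `Cf'`, strongly convex on `[0, ∞)`, and
nonnegative marginal cost at zero. -/
def CostAssumptions (Cf Cf' : ℝ → ℝ) : Prop :=
  (∀ x, HasDerivAt Cf (Cf' x) x) ∧ Continuous Cf' ∧
    (∃ m : ℝ, 0 < m ∧
      ∀ x y, 0 ≤ x → 0 ≤ y → (Cf' x - Cf' y) * (x - y) ≥ m * (x - y) ^ 2) ∧
    0 ≤ Cf' 0

/-- `P` is the unique maximizer of the profit `Q ↦ β * Q - Cf Q` over `Q ≥ 0`. -/
def IsUniqueArgmaxProfit (Cf : ℝ → ℝ) (β P : ℝ) : Prop :=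
  0 ≤ P ∧ (∀ Q, 0 ≤ Q → β * Q - Cf Q ≤ β * P - Cf P) ∧
    ∀ Q, 0 ≤ Q → (∀ R, 0 ≤ R → β * R - Cf R ≤ β * Q - Cf Q) → Q = P

/-! The deviating generator bids strictly above some generator `k` that produces at the KKT point,
whose bid is pinned to the system price `lam`; the ISO then shifts all of generator `i`'s output
to `k`. The original payoff is at least `-C_i(0)` because a convex cost lies below its tangent
line: `C_i(P*_i) - C_i(0) ≤ C_i'(P*_i) P*_i = b*_i P*_i`. -/

theorem IsKKT.marginal_cost_eq_of_pos {n : ℕ} {C' : Fin n → ℝ → ℝ} {Pd P : Fin n → ℝ}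
    {lam : ℝ} {mu : Fin n → ℝ} (h : IsKKT C' Pd P lam mu) {j : Fin n} (hj : 0 < P j) :
    C' j (P j) = lam := by
  obtain ⟨hgrad, -, hP, hmu, hcomp⟩ := h
  have hPmu : P j * mu j = 0 :=
    (sum_eq_zero_iff_of_nonneg fun k _ => mul_nonneg (hP k) (hmu k)).mp hcomp j (mem_univ j)
  rw [hgrad j, (mul_eq_zero.mp hPmu).resolve_left hj.ne', add_zero]

theorem sum_mul_add_single_sub_single {n : ℕ} (f P : Fin n → ℝ) (i k : Fin n) (a : ℝ) :
    ∑ j, f j * (P + Pi.single k a - Pi.single i a : Fin n → ℝ) j =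
      ∑ j, f j * P j + (f k - f i) * a := by
  simp only [Pi.add_apply, Pi.sub_apply, mul_sub, mul_add, sum_sub_distrib, sum_add_distrib,
    Pi.single_apply, mul_ite, mul_zero, sum_ite_eq', mem_univ, if_true]
  ring

theorem Feasible.add_single_sub_single {n : ℕ} {Pd P : Fin n → ℝ} (hP : Feasible Pd P)
    {i k : Fin n} (hki : k ≠ i) : Feasible Pd (P + Pi.single k (P i) - Pi.single i (P i)) := by
  refine ⟨?_, fun j => ?_⟩
  · simpa [hP.1] using sum_mul_add_single_sub_single 1 P i k (P i)
  · rcases eq_or_ne j i with rfl | hji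
    · simp [hki]
    · rcases eq_or_ne j k with rfl | hjk
      · simpa [hji] using add_nonneg (hP.2 j) (hP.2 i)
      · simpa [hji, hjk] using hP.2 j

theorem IsISOOpt.eq_zero_of_lt {n : ℕ} {Pd b P : Fin n → ℝ} (hP : IsISOOpt Pd b P)
    {i k : Fin n} (hki : k ≠ i) (hb : b k < b i) : P i = 0 := by
  have hshift := hP.2 _ (hP.1.add_single_sub_single hki)
  rw [sum_mul_add_single_sub_single b P i k] at hshift
  nlinarith [hP.1.2 i]

theorem CostAssumptions.monotoneOn {Cf Cf' : ℝ → ℝ} (h : CostAssumptions Cf Cf') :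
    MonotoneOn Cf' (Set.Ici 0) := by
  obtain ⟨-, -, ⟨m, hm, hsc⟩, -⟩ := h
  intro x hx y hy hxy
  rcases hxy.eq_or_lt with rfl | hlt
  · rfl
  · have := hsc y x hy hx
    nlinarith [mul_pos hm (pow_pos (sub_pos.mpr hlt) 2)]

theorem sub_le_mul_of_monotoneOn_deriv {f f' : ℝ → ℝ} (hf : ∀ x, HasDerivAt f (f' x) x)
    {x y : ℝ} (hmono : MonotoneOn f' (Set.Icc x y)) (hxy : x ≤ y) :
    f y - f x ≤ f' y * (y - x) := by
  have hdiff : Differentiable ℝ f := fun z => (hf z).differentiableAt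
  refine (convex_Icc x y).image_sub_le_mul_sub_of_deriv_le hdiff.continuous.continuousOn
    hdiff.differentiableOn (fun z hz => ?_) x ⟨le_rfl, hxy⟩ y ⟨hxy, le_rfl⟩ hxy
  rw [interior_Icc] at hz
  rw [(hf z).deriv]
  exact hmono (Set.Ioo_subset_Icc_self hz) ⟨hxy, le_rfl⟩ hz.2.le

theorem higher_bid_no_gain_general {n : ℕ}
    (C C' : Fin n → ℝ → ℝ) (hC : ∀ i, CostAssumptions (C i) (C' i))
    (Pd : Fin n → ℝ)
    (Pstar : Fin n → ℝ) (lam : ℝ) (mu : Fin n → ℝ)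
    (hKKT : IsKKT C' Pd Pstar lam mu)
    (htwo : ∃ i j, i ≠ j ∧ 0 < Pstar i ∧ 0 < Pstar j)
    (bstar : Fin n → ℝ)
    (hb : ∀ j, lam ≤ bstar j ∧ bstar j ≤ C' j (Pstar j))
    (i : Fin n) (bi : ℝ) (hbi : bstar i < bi) :
    ∀ P, IsISOOpt Pd (Function.update bstar i bi) P →
      P i = 0 ∧ Payoff (C i) bi (P i) = -(C i 0) ∧
        Payoff (C i) bi (P i) ≤ Payoff (C i) (bstar i) (Pstar i) ∧
        Payoff (C i) (bstar i) (Pstar i) = bstar i * Pstar i - C i (Pstar i) := by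
  intro P hP
  have hbid_eq {j} (hj : 0 < Pstar j) : bstar j = lam :=
    le_antisymm ((hb j).2.trans (hKKT.marginal_cost_eq_of_pos hj).le) (hb j).1
  obtain ⟨k, hki, hk⟩ : ∃ k, k ≠ i ∧ 0 < Pstar k := by
    obtain ⟨a, a', haa', ha, ha'⟩ := htwo
    by_cases hai : a = i
    · exact ⟨a', hai ▸ haa'.symm, ha'⟩
    · exact ⟨a, hai, ha⟩
  have hPi : P i = 0 := hP.eq_zero_of_lt hki <| by
    rw [Function.update_self, Function.update_of_ne hki, hbid_eq hk]
    linarith [(hb i).1]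
  have hrevenue : bstar i * Pstar i = C' i (Pstar i) * Pstar i := by
    rcases (hKKT.2.2.1 i).eq_or_lt with h0 | hpos
    · simp [← h0]
    · rw [hbid_eq hpos, hKKT.marginal_cost_eq_of_pos hpos]
  have htangent := sub_le_mul_of_monotoneOn_deriv (hC i).1
    ((hC i).monotoneOn.mono Set.Icc_subset_Ici_self) (hKKT.2.2.1 i)
  refine ⟨hPi, by simp [Payoff, hPi], ?_, by simp only [Payoff]; ring⟩
  simp only [Payoff, hPi]
  linarith

/-- Under a KKT triple with at least two strictly producing
generators and an efficient-interval bid profile `bstar`, if generator `i`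
deviates to a bid `bi > bstar i`, then every optimizer `P` of the ISO problem
for bids `(bi, bstar_{-i})` satisfies `P i = 0`, and consequently
`Π_i(bi, P i) = -C_i(0) ≤ Π_i(bstar i, Pstar i) = bstar i * Pstar i - C_i(Pstar i)`. -/
theorem higher_bid_no_gain {n : ℕ} (hn : 2 ≤ n)
    (C C' : Fin n → ℝ → ℝ) (hC : ∀ i, CostAssumptions (C i) (C' i))
    (Pd : Fin n → ℝ) (hPd : ∀ i, 0 ≤ Pd i) (hPdpos : 0 < ∑ i, Pd i)
    (Pstar : Fin n → ℝ) (lam : ℝ) (mu : Fin n → ℝ)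
    (hKKT : IsKKT C' Pd Pstar lam mu)
    (htwo : ∃ i j, i ≠ j ∧ 0 < Pstar i ∧ 0 < Pstar j)
    (bstar : Fin n → ℝ)
    (hb : ∀ j, lam ≤ bstar j ∧ bstar j ≤ C' j (Pstar j))
    (i : Fin n) (bi : ℝ) (hbi : bstar i < bi) :
    ∀ P, IsISOOpt Pd (Function.update bstar i bi) P →
      P i = 0 ∧ Payoff (C i) bi (P i) = -(C i 0) ∧
        Payoff (C i) bi (P i) ≤ Payoff (C i) (bstar i) (Pstar i) ∧
        Payoff (C i) (bstar i) (Pstar i) = bstar i * Pstar i - C i (Pstar i) :=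
  higher_bid_no_gain_general C C' hC Pd Pstar lam mu hKKT htwo bstar hb i bi hbi
end
end

section
/- The KKT triple for the ED problem is unique: if (P¹, λ¹, μ¹) and (P², λ², μ²) are both KKT triples for the ED problem, then P¹ = P², λ¹ = λ², and μ¹ = μ². -/
open Finset

noncomputable section

/-!
Complementary slackness turns the KKT conditions of two triples into
`∑ᵢ (C'ᵢ(P¹ᵢ) - C'ᵢ(P²ᵢ)) (P¹ᵢ - P²ᵢ) = (λ¹ - λ²) (1ᵀP¹ - 1ᵀP²) - (P²)ᵀμ¹ - (P¹)ᵀμ² ≤ 0`,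
while strong convexity makes every summand on the left positive unless `P¹ᵢ = P²ᵢ`; hence
`P¹ = P²`. Since `1ᵀP_d > 0` some generator `j` produces `P¹ⱼ > 0`, so `μ¹ⱼ = μ²ⱼ = 0` and
`λ¹ = C'ⱼ(P¹ⱼ) = λ²`; finally `μ = ∇C(P) - 1λ` is determined by `P` and `λ`.
-/

namespace StrictMonoOn

variable {α : Type*} [Ring α] [LinearOrder α] [IsStrictOrderedRing α] {f : α → α} {s : Set α}
  {x y : α}

theorem sub_mul_sub_nonneg (hf : StrictMonoOn f s) (hx : x ∈ s) (hy : y ∈ s) :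
    0 ≤ (f x - f y) * (x - y) := by
  rcases lt_trichotomy x y with hxy | rfl | hxy
  · exact mul_nonneg_of_nonpos_of_nonpos (sub_nonpos.2 (hf hx hy hxy).le) (sub_nonpos.2 hxy.le)
  · rw [sub_self, zero_mul]
  · exact mul_nonneg (sub_nonneg.2 (hf hy hx hxy).le) (sub_nonneg.2 hxy.le)

theorem sub_mul_sub_pos (hf : StrictMonoOn f s) (hx : x ∈ s) (hy : y ∈ s) (hxy : x ≠ y) :
    0 < (f x - f y) * (x - y) := by
  rcases hxy.lt_or_gt with hxy | hxy
  · exact mul_pos_of_neg_of_neg (sub_neg.2 (hf hx hy hxy)) (sub_neg.2 hxy)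
  · exact mul_pos (sub_pos.2 (hf hy hx hxy)) (sub_pos.2 hxy)

end StrictMonoOn

theorem CostAssumptions.strictMonoOn {Cf Cf' : ℝ → ℝ} (h : CostAssumptions Cf Cf') :
    StrictMonoOn Cf' (Set.Ici 0) := by
  obtain ⟨-, -, ⟨m, hm, hstrong⟩, -⟩ := h
  intro x hx y hy hxy
  have key := hstrong y x hy hx
  have hpos : 0 < m * (y - x) ^ 2 := mul_pos hm (pow_pos (sub_pos.2 hxy) 2)
  nlinarith

namespace IsKKT

variable {n : ℕ} {C' : Fin n → ℝ → ℝ} {Pd P P₁ P₂ mu mu₁ mu₂ : Fin n → ℝ} {lam lam₁ lam₂ : ℝ}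

theorem mul_eq_zero (h : IsKKT C' Pd P lam mu) (i : Fin n) : P i * mu i = 0 :=
  (sum_eq_zero_iff_of_nonneg fun j _ => mul_nonneg (h.2.2.1 j) (h.2.2.2.1 j)).1 h.2.2.2.2 i
    (mem_univ i)

theorem lam_eq_of_pos (h : IsKKT C' Pd P lam mu) {j : Fin n} (hj : 0 < P j) :
    lam = C' j (P j) := by
  have hmu : mu j = 0 := (_root_.mul_eq_zero.1 (h.mul_eq_zero j)).resolve_left hj.ne'
  rw [h.1 j, hmu, add_zero]

theorem mu_eq (h : IsKKT C' Pd P lam mu) : mu = fun i => C' i (P i) - lam :=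
  funext fun i => by rw [h.1 i]; ring

theorem exists_pos (h : IsKKT C' Pd P lam mu) (hPd : 0 < ∑ i, Pd i) : ∃ j, 0 < P j := by
  obtain ⟨j, -, hj⟩ := exists_lt_of_sum_lt (f := fun _ => (0 : ℝ)) (g := P) (s := univ)
    (by rw [sum_const_zero, h.2.1]; exact hPd)
  exact ⟨j, hj⟩

theorem sum_sub_mul_sub_nonpos (h₁ : IsKKT C' Pd P₁ lam₁ mu₁) (h₂ : IsKKT C' Pd P₂ lam₂ mu₂) :
    ∑ i, (C' i (P₁ i) - C' i (P₂ i)) * (P₁ i - P₂ i) ≤ 0 := by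
  have hterm : ∀ i, (C' i (P₁ i) - C' i (P₂ i)) * (P₁ i - P₂ i)
      = (lam₁ - lam₂) * (P₁ i - P₂ i) - P₂ i * mu₁ i - P₁ i * mu₂ i := fun i => by
    linear_combination (P₁ i - P₂ i) * (h₁.1 i - h₂.1 i) + h₁.mul_eq_zero i + h₂.mul_eq_zero i
  have hcross₁ : 0 ≤ ∑ i, P₂ i * mu₁ i :=
    sum_nonneg fun i _ => mul_nonneg (h₂.2.2.1 i) (h₁.2.2.2.1 i)
  have hcross₂ : 0 ≤ ∑ i, P₁ i * mu₂ i :=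
    sum_nonneg fun i _ => mul_nonneg (h₁.2.2.1 i) (h₂.2.2.2.1 i)
  calc ∑ i, (C' i (P₁ i) - C' i (P₂ i)) * (P₁ i - P₂ i)
      = (lam₁ - lam₂) * (∑ i, P₁ i - ∑ i, P₂ i)
          - ∑ i, P₂ i * mu₁ i - ∑ i, P₁ i * mu₂ i := by
        simp only [hterm, mul_sub, mul_sum, sum_sub_distrib]
    _ ≤ 0 := by rw [h₁.2.1, h₂.2.1, sub_self, mul_zero]; linarith

theorem eq_of_strictMonoOn (hC' : ∀ i, StrictMonoOn (C' i) (Set.Ici 0))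
    (h₁ : IsKKT C' Pd P₁ lam₁ mu₁) (h₂ : IsKKT C' Pd P₂ lam₂ mu₂) : P₁ = P₂ := by
  by_contra hne
  obtain ⟨i, hi⟩ := Function.ne_iff.1 hne
  have hpos : 0 < ∑ i, (C' i (P₁ i) - C' i (P₂ i)) * (P₁ i - P₂ i) :=
    sum_pos' (fun j _ => (hC' j).sub_mul_sub_nonneg (h₁.2.2.1 j) (h₂.2.2.1 j))
      ⟨i, mem_univ i, (hC' i).sub_mul_sub_pos (h₁.2.2.1 i) (h₂.2.2.1 i) hi⟩
  exact (h₁.sum_sub_mul_sub_nonpos h₂).not_gt hpos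

end IsKKT

theorem kkt_triple_unique_general {n : ℕ}
    (C C' : Fin n → ℝ → ℝ) (hC : ∀ i, CostAssumptions (C i) (C' i))
    (Pd : Fin n → ℝ) (hPdpos : 0 < ∑ i, Pd i)
    (P₁ P₂ : Fin n → ℝ) (lam₁ lam₂ : ℝ) (mu₁ mu₂ : Fin n → ℝ)
    (hKKT₁ : IsKKT C' Pd P₁ lam₁ mu₁) (hKKT₂ : IsKKT C' Pd P₂ lam₂ mu₂) :
    P₁ = P₂ ∧ lam₁ = lam₂ ∧ mu₁ = mu₂ := by
  obtain rfl : P₁ = P₂ := hKKT₁.eq_of_strictMonoOn (fun i => (hC i).strictMonoOn) hKKT₂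
  obtain ⟨j, hj⟩ := hKKT₁.exists_pos hPdpos
  obtain rfl : lam₁ = lam₂ := (hKKT₁.lam_eq_of_pos hj).trans (hKKT₂.lam_eq_of_pos hj).symm
  exact ⟨rfl, rfl, hKKT₁.mu_eq.trans hKKT₂.mu_eq.symm⟩

/-- The KKT triple for the ED problem is unique. -/
theorem kkt_triple_unique {n : ℕ} (hn : 1 ≤ n)
    (C C' : Fin n → ℝ → ℝ) (hC : ∀ i, CostAssumptions (C i) (C' i))
    (Pd : Fin n → ℝ) (hPd : ∀ i, 0 ≤ Pd i) (hPdpos : 0 < ∑ i, Pd i)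
    (P₁ P₂ : Fin n → ℝ) (lam₁ lam₂ : ℝ) (mu₁ mu₂ : Fin n → ℝ)
    (hKKT₁ : IsKKT C' Pd P₁ lam₁ mu₁) (hKKT₂ : IsKKT C' Pd P₂ lam₂ mu₂) :
    P₁ = P₂ ∧ lam₁ = lam₂ ∧ mu₁ = mu₂ :=
  kkt_triple_unique_general C C' hC Pd hPdpos P₁ P₂ lam₁ lam₂ mu₁ mu₂ hKKT₁ hKKT₂
end
end

section
/- Let A ∈ ℝ^{n×n} be a diagonal matrix with strictly positive diagonal entries and ρ > 0. Let b̄, P̄, μ̄_b, μ̄_g ∈ ℝ^n satisfy b̄ ≥ 0, μ̄_b ≥ 0, b̄ᵀμ̄_b = 0, P̄ ≥ 0, μ̄_g ≥ 0, P̄ᵀμ̄_g = 0, P̄ = g(b̄), and 1ᵀP̄ = 1ᵀP_d. Suppose ω ∈ ℝ^n and b, P_g ∈ ℝ^n with b ≥ 0, P_g ≥ 0 satisfy ωᵀAω + (b − b̄)ᵀ(g(b) − g(b̄)) + ρ(1ᵀ(P̄ − P_g))² + (b − b̄)ᵀμ̄_b + (P_g − P̄)ᵀμ̄_g = 0. Then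 ω = 0, 1ᵀP_g = 1ᵀP_d, and b_i = b̄_i for every index i with P̄_i > 0. -/
open Finset

noncomputable section

/-! The dissipation expression is a sum of five nonnegative terms, so each vanishes. The
frequency and power-balance terms then give `ω = 0` and `1ᵀP_g = 1ᵀP̄ = 1ᵀP_d`. The bid term
vanishes termwise, so for each `i` either `b_i = b̄_i` or `g_i(b_i) = g_i(b̄_i)`; when
`P̄_i = g_i(b̄_i) > 0` the first-order condition `C_i'(g_i(β)) = β` at an interior maximizer
recovers the bid from the output. -/

namespace IsUniqueArgmaxProfit

variable {Cf : ℝ → ℝ} {β β₁ β₂ P P₁ P₂ c : ℝ}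

theorem sub_mul_sub_nonneg (h₁ : IsUniqueArgmaxProfit Cf β₁ P₁)
    (h₂ : IsUniqueArgmaxProfit Cf β₂ P₂) : 0 ≤ (β₁ - β₂) * (P₁ - P₂) := by
  have h₁₂ := h₁.2.1 P₂ h₂.1
  have h₂₁ := h₂.2.1 P₁ h₁.1
  nlinarith

theorem hasDerivAt_eq_price (h : IsUniqueArgmaxProfit Cf β P) (hP : 0 < P)
    (hd : HasDerivAt Cf c P) : c = β := by
  have hmax : IsLocalMax (fun x => β * x - Cf x) P := by
    filter_upwards [eventually_gt_nhds hP] with x hx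
    exact h.2.1 x hx.le
  have hderiv : HasDerivAt (fun x => β * x - Cf x) (β - c) P :=
    (((hasDerivAt_id P).const_mul β).sub hd).congr_deriv (by simp)
  linarith [hmax.hasDerivAt_eq_zero hderiv]

theorem price_eq_of_pos (h₁ : IsUniqueArgmaxProfit Cf β₁ P) (h₂ : IsUniqueArgmaxProfit Cf β₂ P)
    (hP : 0 < P) (hd : HasDerivAt Cf c P) : β₁ = β₂ :=
  (h₁.hasDerivAt_eq_price hP hd).symm.trans (h₂.hasDerivAt_eq_price hP hd)

end IsUniqueArgmaxProfit

section Dissipation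

variable {ι : Type*} [Fintype ι]

theorem sum_sub_mul_nonneg_of_complementary {x xbar μ : ι → ℝ} (hx : ∀ i, 0 ≤ x i)
    (hμ : ∀ i, 0 ≤ μ i) (hcomp : ∑ i, xbar i * μ i = 0) :
    0 ≤ ∑ i, (x i - xbar i) * μ i := by
  simp only [sub_mul, sum_sub_distrib, hcomp, sub_zero]
  exact sum_nonneg fun i _ => mul_nonneg (hx i) (hμ i)

theorem sum_mul_mul_self_nonneg {a ω : ι → ℝ} (ha : ∀ i, 0 ≤ a i) :
    0 ≤ ∑ i, ω i * (a i * ω i) :=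
  sum_nonneg fun i _ => by rw [mul_left_comm]; exact mul_nonneg (ha i) (mul_self_nonneg _)

theorem eq_zero_of_sum_mul_mul_self_eq_zero {a ω : ι → ℝ} (ha : ∀ i, 0 < a i)
    (h : ∑ i, ω i * (a i * ω i) = 0) : ω = 0 := by
  simp only [mul_left_comm (ω _)] at h
  have hterm := (sum_eq_zero_iff_of_nonneg fun i _ =>
    mul_nonneg (ha i).le (mul_self_nonneg (ω i))).mp h
  funext i
  simpa [(ha i).ne'] using hterm i (mem_univ i)

end Dissipation

theorem invariant_set_characterization_general {n : ℕ}
    (C C' : Fin n → ℝ → ℝ) (hC : ∀ i, CostAssumptions (C i) (C' i))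
    (g : Fin n → ℝ → ℝ) (hg : ∀ i β, IsUniqueArgmaxProfit (C i) β (g i β))
    (Pd : Fin n → ℝ)
    (A : Fin n → ℝ) (hA : ∀ i, 0 < A i)
    (ρ : ℝ) (hρ : 0 < ρ)
    (bbar Pbar μb μg : Fin n → ℝ)
    (hμb : ∀ i, 0 ≤ μb i)
    (hcompb : ∑ i, bbar i * μb i = 0)
    (hμg : ∀ i, 0 ≤ μg i)
    (hcompg : ∑ i, Pbar i * μg i = 0)
    (hPg_bar : ∀ i, Pbar i = g i (bbar i))
    (hbal : ∑ i, Pbar i = ∑ i, Pd i)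
    (ω b Pg : Fin n → ℝ) (hb : ∀ i, 0 ≤ b i) (hPg : ∀ i, 0 ≤ Pg i)
    (hzero : (∑ i, ω i * (A i * ω i))
        + (∑ i, (b i - bbar i) * (g i (b i) - g i (bbar i)))
        + ρ * (∑ i, (Pbar i - Pg i)) ^ 2
        + (∑ i, (b i - bbar i) * μb i)
        + (∑ i, (Pg i - Pbar i) * μg i) = 0) :
    ω = 0 ∧ (∑ i, Pg i = ∑ i, Pd i) ∧ ∀ i, 0 < Pbar i → b i = bbar i := by
  have hbid_nonneg : ∀ i, 0 ≤ (b i - bbar i) * (g i (b i) - g i (bbar i)) := fun i =>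
    (hg i (b i)).sub_mul_sub_nonneg (hg i (bbar i))
  have hfreq_nonneg := sum_mul_mul_self_nonneg (ω := ω) fun i => (hA i).le
  have hbids_nonneg := sum_nonneg fun i (_ : i ∈ univ) => hbid_nonneg i
  have hbalance_nonneg := mul_nonneg hρ.le (sq_nonneg (∑ i, (Pbar i - Pg i)))
  have hμb_nonneg := sum_sub_mul_nonneg_of_complementary hb hμb hcompb
  have hμg_nonneg := sum_sub_mul_nonneg_of_complementary hPg hμg hcompg
  obtain ⟨hω, hbid, hbalance⟩ : ∑ i, ω i * (A i * ω i) = 0 ∧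
      ∑ i, (b i - bbar i) * (g i (b i) - g i (bbar i)) = 0 ∧
      ρ * (∑ i, (Pbar i - Pg i)) ^ 2 = 0 := ⟨by linarith, by linarith, by linarith⟩
  refine ⟨eq_zero_of_sum_mul_mul_self_eq_zero hA hω, ?_, fun i hPi => ?_⟩
  · have : ∑ i, (Pbar i - Pg i) = 0 := by simpa [hρ.ne'] using hbalance
    rw [sum_sub_distrib, sub_eq_zero] at this
    rw [← this, hbal]
  · have hi := (sum_eq_zero_iff_of_nonneg fun i _ => hbid_nonneg i).mp hbid i (mem_univ i)
    rcases mul_eq_zero.mp hi with h | h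
    · linarith
    · rw [hPg_bar] at hPi
      rw [sub_eq_zero] at h
      exact (hg i (b i)).price_eq_of_pos (h ▸ hg i (bbar i)) (h ▸ hPi) ((hC i).1 _)

/-- Characterization of the set where the Lyapunov-derivative
expression vanishes: if the sum of the (nonnegative) dissipation terms equals
zero, then the frequency deviation is zero, the power balance holds, and the
bids agree with the equilibrium bids at every strictly producing node. -/
theorem invariant_set_characterization {n : ℕ}
    (C C' : Fin n → ℝ → ℝ) (hC : ∀ i, CostAssumptions (C i) (C' i))
    (g : Fin n → ℝ → ℝ) (hg : ∀ i β, IsUniqueArgmaxProfit (C i) β (g i β))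
    (Pd : Fin n → ℝ)
    (A : Fin n → ℝ) (hA : ∀ i, 0 < A i)
    (ρ : ℝ) (hρ : 0 < ρ)
    (bbar Pbar μb μg : Fin n → ℝ)
    (hbbar : ∀ i, 0 ≤ bbar i) (hμb : ∀ i, 0 ≤ μb i)
    (hcompb : ∑ i, bbar i * μb i = 0)
    (hPbar : ∀ i, 0 ≤ Pbar i) (hμg : ∀ i, 0 ≤ μg i)
    (hcompg : ∑ i, Pbar i * μg i = 0)
    (hPg_bar : ∀ i, Pbar i = g i (bbar i))
    (hbal : ∑ i, Pbar i = ∑ i, Pd i)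
    (ω b Pg : Fin n → ℝ) (hb : ∀ i, 0 ≤ b i) (hPg : ∀ i, 0 ≤ Pg i)
    (hzero : (∑ i, ω i * (A i * ω i))
        + (∑ i, (b i - bbar i) * (g i (b i) - g i (bbar i)))
        + ρ * (∑ i, (Pbar i - Pg i)) ^ 2
        + (∑ i, (b i - bbar i) * μb i)
        + (∑ i, (Pg i - Pbar i) * μg i) = 0) :
    ω = 0 ∧ (∑ i, Pg i = ∑ i, Pd i) ∧ ∀ i, 0 < Pbar i → b i = bbar i :=
  invariant_set_characterization_general C C' hC g hg Pd A hA ρ hρ bbar Pbar μb μg hμb hcompb hμg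
    hcompg hPg_bar hbal ω b Pg hb hPg hzero
end
end
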